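/- arXiv:2308.06520 — 4 statements merged into one kernel-verified Lean document; each statement's English description precedes it below -/
import Mathlib

section
/- Let M be a matroid, V' a ρ-DBS in M, and A ⊆ V a subset with V' not contained in span_M(A). Then there exists V'' ⊆ V' such that V'' is a ρ-DBS in the contracted matroid M/A and rank_{M/A}(V'') = rank_{M/A}(V' \ A). -/
open Set ENNReal

namespace Paper

variable {α : Type*}

/-- The rank (in `ℕ∞`) of a set `X` with respect to an independence predicate `Indep`:
the supremum of the cardinalities of independent subsets of `X`. -/
noncomputable def rkP (Indep : Set α → Prop) (X : Set α) : ℕ∞ :=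
  ⨆ I ∈ {I | Indep I ∧ I ⊆ X}, I.encard

/-- The rank of a set in a matroid. -/
noncomputable def rk (M : Matroid α) (X : Set α) : ℕ∞ := rkP M.Indep X

/-- Independence in the contraction `M/A`. -/
def CIndep (M : Matroid α) (A S : Set α) : Prop :=
  S ⊆ M.E \ A ∧ ∃ B, M.IsBasis' B A ∧ M.Indep (S ∪ B)

/-- The rank of a set in the contraction `M/A`. -/
noncomputable def crk (M : Matroid α) (A X : Set α) : ℕ∞ := rkP (CIndep M A) X

/-- The density `|X| / rank X` of a set `X` (with respect to an independence
predicate), valued in `ℝ≥0∞`; the empty set has density `0` and a nonempty set of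
rank `0` has density `∞`. -/
noncomputable def densP (Indep : Set α → Prop) (X : Set α) : ℝ≥0∞ :=
  (X.encard : ℝ≥0∞) / (rkP Indep X : ℝ≥0∞)

/-- The density of a set in a matroid. -/
noncomputable def dens (M : Matroid α) (X : Set α) : ℝ≥0∞ := densP M.Indep X

/-- A `ρ`-Density-Balanced-Subset with respect to an independence predicate. -/
def IsDBSP (Indep : Set α → Prop) (ρ : ℕ) (V' : Set α) : Prop :=
  densP Indep V' = ρ ∧ ∀ U ⊆ V', densP Indep U ≤ ρ

/-- A `ρ`-DBS in a matroid `M`. -/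
def IsDBS (M : Matroid α) (ρ : ℕ) (V' : Set α) : Prop :=
  V' ⊆ M.E ∧ IsDBSP M.Indep ρ V'

/-- Independence in the `ρ`-fold matroid union `ρM`: the set can be partitioned
into `ρ` independent sets of `M`. -/
def UnionIndep (M : Matroid α) (ρ : ℕ) (S : Set α) : Prop :=
  ∃ B : Fin ρ → Set α, (∀ i, M.Indep (B i)) ∧
    Pairwise (Function.onFun Disjoint B) ∧ S = ⋃ i, B i

end Paper

namespace Paper

variable {α : Type*}

section Aux


lemma le_rkP {Indep : Set α → Prop} {I X : Set α} (hI : Indep I) (hIX : I ⊆ X) :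
    I.encard ≤ rkP Indep X := by
  exact le_iSup₂_of_le I ⟨hI, hIX⟩ le_rfl

lemma rkP_le {Indep : Set α → Prop} {X : Set α} {b : ℕ∞}
    (h : ∀ I, Indep I → I ⊆ X → I.encard ≤ b) : rkP Indep X ≤ b :=
  iSup₂_le fun I hI => h I hI.1 hI.2

lemma rkP_mono {Indep : Set α → Prop} {X Y : Set α} (h : X ⊆ Y) :
    rkP Indep X ≤ rkP Indep Y :=
  rkP_le fun I hI hIX => le_rkP hI (hIX.trans h)

lemma rkP_empty (Indep : Set α → Prop) : rkP Indep ∅ = 0 := by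
  refine le_antisymm (rkP_le fun I _ hIX => ?_) zero_le
  simp [subset_empty_iff.mp hIX]

-- ## ℕ∞ helpers

lemma cancel_add_right {a b k : ℕ∞} (hk : k ≠ ⊤) (h : a + k ≤ b + k) : a ≤ b :=
  (WithTop.add_le_add_iff_right hk).mp h

lemma cancel_mul_left {a b : ℕ∞} {ρ : ℕ} (hρ : 0 < ρ) (hb : b ≠ ⊤)
    (h : (ρ : ℕ∞) * a ≤ (ρ : ℕ∞) * b) : a ≤ b := by
  lift b to ℕ using hb
  cases a with
  | top =>
    rw [ENat.mul_top (by exact_mod_cast hρ.ne' : (ρ:ℕ∞) ≠ 0)] at h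
    simp only [top_le_iff] at h
    exact absurd h (by exact_mod_cast (WithTop.coe_lt_top (ρ * b)).ne)
  | coe a => exact_mod_cast Nat.le_of_mul_le_mul_left (by exact_mod_cast h) hρ

-- ## rk lemmas

lemma rk_eq_of_basis' {M : Matroid α} {I X : Set α} (hI : M.IsBasis' I X) :
    rk M X = I.encard := by
  refine le_antisymm (rkP_le fun J hJ hJX => ?_) (le_rkP hI.indep hI.subset)
  obtain ⟨J', hJ', hJJ'⟩ := hJ.subset_isBasis'_of_subset hJX
  exact (encard_le_encard hJJ').trans (hJ'.encard_eq_encard hI).le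

lemma rk_ne_top {M : Matroid α} [M.Finite] (X : Set α) : rk M X ≠ ⊤ := by
  refine (rkP_le fun I hI _ => encard_le_encard hI.subset_ground).trans_lt
    M.ground_finite.encard_lt_top |>.ne

lemma rk_submod (M : Matroid α) (X Y : Set α) :
    rk M (X ∪ Y) + rk M (X ∩ Y) ≤ rk M X + rk M Y := by
  obtain ⟨I, hI⟩ := M.exists_isBasis' (X ∩ Y)
  obtain ⟨J, hJ, hIJ⟩ := hI.indep.subset_isBasis'_of_subset
    (hI.subset.trans (inter_subset_left.trans subset_union_left))
  rw [rk_eq_of_basis' hJ, rk_eq_of_basis' hI]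
  have hJXY : J ∩ (X ∩ Y) = I :=
    (hI.eq_of_subset_indep (hJ.indep.subset inter_subset_left)
      (subset_inter hIJ hI.subset) inter_subset_right).symm
  have key : (J ∩ X) ∪ (J ∩ Y) = J := by
    rw [← inter_union_distrib_left]
    exact inter_eq_self_of_subset_left hJ.subset
  have key2 : (J ∩ X) ∩ (J ∩ Y) = I := by
    rw [← hJXY]; ext z; simp; tauto
  calc J.encard + I.encard = ((J∩X) ∪ (J∩Y)).encard + ((J∩X) ∩ (J∩Y)).encard := by
        rw [key, key2]
    _ = (J ∩ X).encard + (J ∩ Y).encard := encard_union_add_encard_inter _ _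
    _ ≤ rk M X + rk M Y :=
        add_le_add (le_rkP (hJ.indep.subset inter_subset_left) inter_subset_right)
          (le_rkP (hJ.indep.subset inter_subset_left) inter_subset_right)

-- ## CIndep / crk basics

lemma CIndep.subset {M : Matroid α} {A S T : Set α} (hS : CIndep M A S) (hTS : T ⊆ S) :
    CIndep M A T := by
  obtain ⟨hSE, B, hB, hind⟩ := hS
  exact ⟨hTS.trans hSE, B, hB, hind.subset (union_subset_union_left _ hTS)⟩

lemma cIndep_empty (M : Matroid α) (A : Set α) : CIndep M A ∅ := by
  obtain ⟨B, hB⟩ := M.exists_isBasis' A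
  exact ⟨empty_subset _, B, hB, by simpa using hB.indep⟩

lemma crk_ne_top {M : Matroid α} [M.Finite] (A X : Set α) : crk M A X ≠ ⊤ := by
  refine (rkP_le fun I hI _ => encard_le_encard (hI.1.trans diff_subset)).trans_lt
    M.ground_finite.encard_lt_top |>.ne

lemma crk_attained (M : Matroid α) [M.Finite] (A X : Set α) :
    ∃ S, CIndep M A S ∧ S ⊆ X ∧ crk M A X = S.encard := by
  set F : Set (Set α) := {S | CIndep M A S ∧ S ⊆ X} with hF
  have hFfin : F.Finite := by
    refine M.ground_finite.finite_subsets.subset ?_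
    rintro S ⟨hS, -⟩; exact hS.1.trans diff_subset
  have hFne : F.Nonempty := ⟨∅, cIndep_empty M A, empty_subset _⟩
  obtain ⟨S, hSF, hSmax⟩ := Set.Finite.exists_maximalFor Set.encard F hFfin hFne
  refine ⟨S, hSF.1, hSF.2, le_antisymm (rkP_le fun I hI hIX => ?_) (le_rkP hSF.1 hSF.2)⟩
  by_contra hlt
  push_neg at hlt
  exact absurd (hSmax ⟨hI, hIX⟩ hlt.le) (not_le.mpr hlt)

lemma crk_diff (M : Matroid α) (A X : Set α) : crk M A X = crk M A (X \ A) := by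
  refine le_antisymm (rkP_le fun I hI hIX => le_rkP hI (fun x hx => ⟨hIX hx, (hI.1 hx).2⟩))
    (rkP_mono diff_subset)

/-- Key relation: `crk M A X + rk M A = rk M ((X ∩ (M.E \ A)) ∪ A)`. -/
lemma crk_add_rk (M : Matroid α) [M.Finite] (A X : Set α) :
    crk M A X + rk M A = rk M ((X ∩ (M.E \ A)) ∪ A) := by
  set X' := X ∩ (M.E \ A) with hX'
  apply le_antisymm
  · obtain ⟨S, hS, hSX, hc⟩ := crk_attained M A X
    obtain ⟨hSE, B, hB, hind⟩ := hS
    have hdisj : Disjoint S B := disjoint_of_subset hSE hB.subset disjoint_sdiff_left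
    have hSX' : S ⊆ X' := subset_inter hSX hSE
    rw [hc, rk_eq_of_basis' hB, ← encard_union_eq hdisj]
    exact le_rkP hind (union_subset_union hSX' hB.subset)
  · obtain ⟨B₀, hB₀⟩ := M.exists_isBasis' A
    obtain ⟨J, hJ, hB₀J⟩ := hB₀.indep.subset_isBasis'_of_subset
      (hB₀.subset.trans (subset_union_right : A ⊆ X' ∪ A))
    have hJA : J ∩ A = B₀ :=
      (hB₀.eq_of_subset_indep (hJ.indep.subset inter_subset_left)
        (subset_inter hB₀J hB₀.subset) inter_subset_right).symm
    have hCI : CIndep M A (J \ A) := by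
      refine ⟨fun y hy => ⟨hJ.indep.subset_ground hy.1, hy.2⟩, B₀, hB₀,
        hJ.indep.subset ?_⟩
      rw [← hJA]
      exact union_subset diff_subset inter_subset_left
    have hJsplit : (J \ A).encard + B₀.encard = J.encard := by
      rw [← hJA, encard_diff_add_encard_inter]
    have hJX' : J \ A ⊆ X := by
      intro y hy
      rcases hJ.subset hy.1 with h | h
      · rw [hX'] at h
        exact h.1
      · exact absurd h hy.2
    rw [rk_eq_of_basis' hJ, rk_eq_of_basis' hB₀, ← hJsplit]
    exact add_le_add_left (le_rkP hCI hJX') _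

lemma crk_submod (M : Matroid α) [M.Finite] (A X Y : Set α) :
    crk M A (X ∪ Y) + crk M A (X ∩ Y) ≤ crk M A X + crk M A Y := by
  have hcan : rk M A + rk M A ≠ ⊤ :=
    WithTop.add_ne_top.mpr ⟨rk_ne_top (M := M) A, rk_ne_top (M := M) A⟩
  refine cancel_add_right hcan ?_
  rw [add_add_add_comm, crk_add_rk, crk_add_rk, add_add_add_comm, crk_add_rk, crk_add_rk]
  have h1 : (X ∪ Y) ∩ (M.E \ A) = (X ∩ (M.E \ A)) ∪ (Y ∩ (M.E \ A)) := by
    rw [union_inter_distrib_right]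
  have h2 : (X ∩ Y) ∩ (M.E \ A) = (X ∩ (M.E \ A)) ∩ (Y ∩ (M.E \ A)) := by
    ext z; simp; tauto
  rw [h1, h2]
  have h3 : (X ∩ (M.E \ A)) ∪ (Y ∩ (M.E \ A)) ∪ A
      = ((X ∩ (M.E \ A)) ∪ A) ∪ ((Y ∩ (M.E \ A)) ∪ A) := by
    ext z; simp; tauto
  have h4 : ((X ∩ (M.E \ A)) ∩ (Y ∩ (M.E \ A))) ∪ A
      = ((X ∩ (M.E \ A)) ∪ A) ∩ ((Y ∩ (M.E \ A)) ∪ A) := by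
    ext z; simp; tauto
  rw [h3, h4]
  exact rk_submod M _ _

lemma crk_insert_le (M : Matroid α) (A X : Set α) (x : α) :
    crk M A (insert x X) ≤ crk M A X + 1 := by
  refine rkP_le fun I hI hIX => ?_
  have h1 : I ⊆ insert x (I \ {x}) := by
    intro y hy; by_cases hyx : y = x
    · exact hyx ▸ mem_insert _ _
    · exact mem_insert_of_mem _ ⟨hy, hyx⟩
  refine (encard_le_encard h1).trans ((encard_insert_le _ _).trans ?_)
  have : I \ {x} ⊆ X := by
    intro y hy
    rcases hIX hy.1 with h | h
    · exact absurd h hy.2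
    · exact h
  exact add_le_add_left (le_rkP (hI.subset diff_subset) this) 1

/-- "closure" lemma for `crk`. -/
lemma crk_union_eq_of_forall {M : Matroid α} [M.Finite] {A T : Set α} {S : Set α}
    (hS : S.Finite) (h : ∀ x ∈ S, crk M A (insert x T) = crk M A T) :
    crk M A (T ∪ S) = crk M A T := by
  refine Set.Finite.induction_on_subset (motive := fun s _ => crk M A (T ∪ s) = crk M A T) _ hS
    (by simp) ?_
  intro a s haS hsS has hih
  have ha' : crk M A (insert a T) = crk M A T := h a haS
  have hid : (T ∪ s) ∪ (insert a T) = insert a (T ∪ s) := by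
    ext z; simp; tauto
  have hsub := crk_submod M A (T ∪ s) (insert a T)
  rw [hid, ha', hih] at hsub
  have hTle : crk M A T ≤ crk M A ((T ∪ s) ∩ insert a T) :=
    rkP_mono (subset_inter subset_union_left (subset_insert _ _))
  have : crk M A (insert a (T ∪ s)) + crk M A T ≤ crk M A T + crk M A T :=
    le_trans (add_le_add_right hTle _) hsub
  have hle : crk M A (insert a (T ∪ s)) ≤ crk M A T :=
    cancel_add_right (crk_ne_top A T) this
  rw [union_insert]
  exact le_antisymm hle (rkP_mono (subset_union_left.trans (subset_insert _ _)))


lemma toE_ne_zero {r : ℕ∞} (h : r ≠ 0) : (r : ℝ≥0∞) ≠ 0 := by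
  intro h0
  exact h (by rwa [← ENat.toENNReal_zero, ENat.toENNReal_inj] at h0)

lemma toE_ne_top {r : ℕ∞} (h : r ≠ ⊤) : (r : ℝ≥0∞) ≠ ⊤ := by
  intro h0
  exact h (by rwa [← ENat.toENNReal_top, ENat.toENNReal_inj] at h0)

lemma rho_mul_ne_top {c : ℕ∞} (ρ : ℕ) (hc : c ≠ ⊤) : (ρ : ℕ∞) * c ≠ ⊤ := by
  lift c to ℕ using hc
  exact_mod_cast (WithTop.coe_lt_top (ρ * c)).ne

lemma densP_le_of_encard_le {Indep : Set α → Prop} {X : Set α} {ρ : ℕ}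
    (h : X.encard ≤ (ρ : ℕ∞) * rkP Indep X) (hfin : rkP Indep X ≠ ⊤) :
    densP Indep X ≤ ρ := by
  set r := rkP Indep X with hr'
  by_cases hr : r = 0
  · have hX : X.encard = 0 := le_antisymm (by simpa [hr] using h) zero_le
    simp [densP, hX]
  · rw [densP, ← hr', ENNReal.div_le_iff (toE_ne_zero hr) (toE_ne_top hfin)]
    calc (X.encard : ℝ≥0∞) ≤ (((ρ : ℕ∞) * r : ℕ∞) : ℝ≥0∞) := ENat.toENNReal_le.mpr h
      _ = (ρ : ℝ≥0∞) * (r : ℝ≥0∞) := by rw [ENat.toENNReal_mul, ENat.toENNReal_coe]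

lemma encard_le_of_densP_le {Indep : Set α → Prop} {X : Set α} {ρ : ℕ}
    (hfin : rkP Indep X ≠ ⊤) (h : densP Indep X ≤ ρ) :
    X.encard ≤ (ρ : ℕ∞) * rkP Indep X := by
  set r := rkP Indep X with hr'
  by_cases hr : r = 0
  · by_cases hX : X.encard = 0
    · simp [hX]
    · exfalso
      rw [densP, ← hr', hr, ENat.toENNReal_zero, ENNReal.div_zero (toE_ne_zero hX)] at h
      exact (ENNReal.natCast_ne_top ρ) (top_le_iff.mp h)
  · rw [densP, ← hr', ENNReal.div_le_iff (toE_ne_zero hr) (toE_ne_top hfin)] at h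
    have h2 : (X.encard : ℝ≥0∞) ≤ (((ρ : ℕ∞) * r : ℕ∞) : ℝ≥0∞) := by
      rw [ENat.toENNReal_mul, ENat.toENNReal_coe]; exact h
    exact ENat.toENNReal_le.mp h2

lemma encard_eq_of_densP_eq {Indep : Set α → Prop} {X : Set α} {ρ : ℕ} (hρ : 0 < ρ)
    (hfin : rkP Indep X ≠ ⊤) (h : densP Indep X = ρ) :
    X.encard = (ρ : ℕ∞) * rkP Indep X := by
  set r := rkP Indep X with hr'
  by_cases hr : r = 0
  · exfalso
    by_cases hX : X.encard = 0
    · rw [densP, ← hr', hX] at h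
      simp only [ENat.toENNReal_zero, ENNReal.zero_div] at h
      exact hρ.ne' (by exact_mod_cast h.symm)
    · rw [densP, ← hr', hr, ENat.toENNReal_zero, ENNReal.div_zero (toE_ne_zero hX)] at h
      exact (ENNReal.natCast_ne_top ρ) h.symm
  · rw [densP, ← hr', eq_comm, ENNReal.eq_div_iff (toE_ne_zero hr) (toE_ne_top hfin)] at h
    have h2 : (((r * (ρ : ℕ∞) : ℕ∞)) : ℝ≥0∞) = (X.encard : ℝ≥0∞) := by
      rw [ENat.toENNReal_mul, ENat.toENNReal_coe]; exact h
    have h3 : r * (ρ : ℕ∞) = X.encard := ENat.toENNReal_inj.mp h2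
    rw [← h3, mul_comm]

lemma densP_eq_of_encard_eq {Indep : Set α → Prop} {X : Set α} {ρ : ℕ}
    (h : X.encard = (ρ : ℕ∞) * rkP Indep X)
    (hr0 : rkP Indep X ≠ 0) (hrt : rkP Indep X ≠ ⊤) : densP Indep X = ρ := by
  rw [densP, h, ENat.toENNReal_mul, ENat.toENNReal_coe, mul_div_assoc,
    ENNReal.div_self (toE_ne_zero hr0) (toE_ne_top hrt), mul_one]


lemma inter_diff_union_self {X A E : Set α} (hXE : X ⊆ E) :
    (X ∩ (E \ A)) ∪ A = X ∪ A := by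
  ext z
  simp only [mem_union, mem_inter_iff, mem_diff]
  constructor
  · rintro (⟨h, -⟩ | h)
    · exact Or.inl h
    · exact Or.inr h
  · rintro (h | h)
    · by_cases hzA : z ∈ A
      · exact Or.inr hzA
      · exact Or.inl ⟨h, hXE h, hzA⟩
    · exact Or.inr h

end Aux

end Paper

namespace Paper

/-- If `V'` is a `ρ`-DBS in `M` and `V'` is not contained in the
span of `A`, then some `V'' ⊆ V'` is a `ρ`-DBS in `M/A` with
`rank_{M/A}(V'') = rank_{M/A}(V' \ A)`. -/
theorem stmt2 {α : Type*} (M : Matroid α) [M.Finite] (ρ : ℕ) (hρ : 0 < ρ)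
    (V' A : Set α) (hV' : IsDBS M ρ V') (hA : A ⊆ M.E)
    (hspan : ¬ V' ⊆ M.closure A) :
    ∃ V'' ⊆ V', IsDBSP (CIndep M A) ρ V'' ∧ crk M A V'' = crk M A (V' \ A) := by
  obtain ⟨hV'E, hdV', hdU⟩ := hV'
  have hV'fin : V'.Finite := M.ground_finite.subset hV'E
  -- cardinality forms of the density hypotheses
  have hcard : V'.encard = (ρ : ℕ∞) * rkP M.Indep V' :=
    encard_eq_of_densP_eq hρ (rk_ne_top (M := M) V') hdV'
  have hUcard : ∀ U ⊆ V', U.encard ≤ (ρ : ℕ∞) * rkP M.Indep U :=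
    fun U hU => encard_le_of_densP_le (rk_ne_top (M := M) U) (hdU U hU)
  -- `crk M A V' ≥ 1` from `hspan`
  obtain ⟨x₀, hx₀V', hx₀cl⟩ := not_subset.mp hspan
  have hone : 1 ≤ crk M A V' := by
    obtain ⟨B, hB⟩ := M.exists_isBasis' A
    have hx₀E : x₀ ∈ M.E := hV'E hx₀V'
    have hx₀A : x₀ ∉ A := fun h => hx₀cl (M.subset_closure A hA h)
    have hx₀B : x₀ ∉ M.closure B := by rwa [hB.closure_eq_closure]
    have hins : M.Indep (insert x₀ B) := by
      rw [hB.indep.insert_indep_iff]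
      exact Or.inl ⟨hx₀E, hx₀B⟩
    have hCI : CIndep M A {x₀} :=
      ⟨singleton_subset_iff.mpr ⟨hx₀E, hx₀A⟩, B, hB, by rwa [singleton_union]⟩
    simpa [crk] using le_rkP hCI (singleton_subset_iff.mpr hx₀V')
  -- the submodularity-based counting inequality (*)
  have hstar : ∀ U ⊆ V',
      (ρ : ℕ∞) * crk M A V' ≤ (V' \ U).encard + (ρ : ℕ∞) * crk M A U := by
    intro U hUV'
    have hUE : U ⊆ M.E := hUV'.trans hV'E
    have hsub := rk_submod M V' (U ∪ A)
    have h1 : V' ∪ (U ∪ A) = V' ∪ A := by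
      rw [← union_assoc, union_eq_self_of_subset_right hUV']
    have h2 : rk M U ≤ rk M (V' ∩ (U ∪ A)) :=
      rkP_mono (subset_inter hUV' subset_union_left)
    have hsub2 : rk M (V' ∪ A) + rk M U ≤ rk M V' + rk M (U ∪ A) := by
      rw [h1] at hsub
      exact le_trans (add_le_add_right h2 _) hsub
    have hmul : (ρ : ℕ∞) * rk M (V' ∪ A) + (ρ : ℕ∞) * rk M U ≤
        (ρ : ℕ∞) * rk M V' + (ρ : ℕ∞) * rk M (U ∪ A) := by
      rw [← mul_add, ← mul_add]
      exact mul_le_mul_right hsub2 _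
    have hR4V : crk M A V' + rk M A = rk M (V' ∪ A) := by
      have h := crk_add_rk M A V'
      rwa [inter_diff_union_self hV'E] at h
    have hR4U : crk M A U + rk M A = rk M (U ∪ A) := by
      have h := crk_add_rk M A U
      rwa [inter_diff_union_self hUE] at h
    rw [← hR4V, ← hR4U, mul_add, mul_add] at hmul
    -- hmul : ρ*crk V' + ρ*rk A + ρ*rk U ≤ ρ*rk V' + (ρ*crk U + ρ*rk A)
    have hmul2 : ((ρ : ℕ∞) * crk M A V' + (ρ : ℕ∞) * rk M U) + (ρ : ℕ∞) * rk M A ≤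
        ((ρ : ℕ∞) * rk M V' + (ρ : ℕ∞) * crk M A U) + (ρ : ℕ∞) * rk M A := by
      calc ((ρ : ℕ∞) * crk M A V' + (ρ : ℕ∞) * rk M U) + (ρ : ℕ∞) * rk M A
          = ((ρ : ℕ∞) * crk M A V' + (ρ : ℕ∞) * rk M A) + (ρ : ℕ∞) * rk M U := by ring
        _ ≤ (ρ : ℕ∞) * rk M V' + ((ρ : ℕ∞) * crk M A U + (ρ : ℕ∞) * rk M A) := hmul
        _ = ((ρ : ℕ∞) * rk M V' + (ρ : ℕ∞) * crk M A U) + (ρ : ℕ∞) * rk M A := by ring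
    have hmul3 : (ρ : ℕ∞) * crk M A V' + (ρ : ℕ∞) * rk M U ≤
        (ρ : ℕ∞) * rk M V' + (ρ : ℕ∞) * crk M A U :=
      cancel_add_right (rho_mul_ne_top ρ (rk_ne_top (M := M) A)) hmul2
    have hUfin : U.encard ≠ ⊤ := (hV'fin.subset hUV').encard_lt_top.ne
    have hmul4 : (ρ : ℕ∞) * crk M A V' + U.encard ≤
        ((V' \ U).encard + (ρ : ℕ∞) * crk M A U) + U.encard := by
      calc (ρ : ℕ∞) * crk M A V' + U.encard
          ≤ (ρ : ℕ∞) * crk M A V' + (ρ : ℕ∞) * rk M U :=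
            add_le_add_right (hUcard U hUV') _
        _ ≤ (ρ : ℕ∞) * rk M V' + (ρ : ℕ∞) * crk M A U := hmul3
        _ = V'.encard + (ρ : ℕ∞) * crk M A U := by
            have hcard' : V'.encard = (ρ : ℕ∞) * rk M V' := hcard
            rw [← hcard']
        _ = ((V' \ U).encard + U.encard) + (ρ : ℕ∞) * crk M A U := by
            rw [encard_diff_add_encard_of_subset hUV']
        _ = ((V' \ U).encard + (ρ : ℕ∞) * crk M A U) + U.encard := by ring
    exact cancel_add_right hUfin hmul4
  -- choose a maximal `W ⊆ V'` with the packing property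
  have hFfin : {Ws : Set α | Ws ⊆ V' ∧ ∀ U ⊆ Ws, U.encard ≤ (ρ : ℕ∞) * crk M A U}.Finite :=
    hV'fin.finite_subsets.subset fun _ hW => hW.1
  have hFne : {Ws : Set α | Ws ⊆ V' ∧ ∀ U ⊆ Ws, U.encard ≤ (ρ : ℕ∞) * crk M A U}.Nonempty :=
    ⟨∅, empty_subset _, fun U hU => by simp [subset_empty_iff.mp hU]⟩
  obtain ⟨W, ⟨hWV', hWP⟩, hWmax⟩ :=
    Set.Finite.exists_maximalFor Set.encard _ hFfin hFne
  have hWfin : W.Finite := hV'fin.subset hWV'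
  have hmaxW : ∀ x ∈ V', x ∉ W → ¬ (∀ U ⊆ insert x W, U.encard ≤ (ρ : ℕ∞) * crk M A U) := by
    intro x hx hxW hPx
    have heq : W.encard = (insert x W).encard :=
      le_antisymm (encard_le_encard (subset_insert _ _))
        (hWmax ⟨insert_subset hx hWV', hPx⟩ (encard_le_encard (subset_insert _ _)))
    rw [encard_insert_of_notMem hxW] at heq
    have : W.encard + 0 = W.encard + 1 := by rw [add_zero]; exact heq
    exact absurd (WithTop.add_left_cancel hWfin.encard_lt_top.ne this) (show (0 : ℕ∞) ≠ 1 by simp)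
  -- Step 3 : `crk M A W = crk M A V'`
  have hrkW : crk M A W = crk M A V' := by
    by_cases hall : ∀ x ∈ V', crk M A (insert x W) = crk M A W
    · have h := crk_union_eq_of_forall hV'fin hall
      rw [union_eq_self_of_subset_left hWV'] at h
      exact h.symm
    · exfalso
      push_neg at hall
      obtain ⟨x, hxV', hx⟩ := hall
      have hxW : x ∉ W := fun h => hx (by rw [insert_eq_of_mem h])
      have hlt : crk M A W < crk M A (insert x W) :=
        lt_of_le_of_ne (rkP_mono (subset_insert _ _)) (Ne.symm hx)
      have hsucc : crk M A W + 1 ≤ crk M A (insert x W) := Order.add_one_le_of_lt hlt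
      refine hmaxW x hxV' hxW ?_
      intro U hU
      by_cases hxU : x ∈ U
      · have hU0W : U \ {x} ⊆ W := by
          intro y hy
          rcases hU hy.1 with h | h
          · exact absurd h hy.2
          · exact h
        have hUx : U ⊆ insert x (U \ {x}) := by
          intro y hy
          by_cases h : y = x
          · exact h ▸ mem_insert _ _
          · exact mem_insert_of_mem _ ⟨hy, h⟩
        have hsub := crk_submod M A W (insert x (U \ {x}))
        have hidu : W ∪ insert x (U \ {x}) = insert x W := by
          rw [union_insert, union_eq_self_of_subset_right hU0W]
        rw [hidu] at hsub
        have hiu : crk M A (U \ {x}) ≤ crk M A (W ∩ insert x (U \ {x})) :=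
          rkP_mono (subset_inter hU0W (subset_insert _ _))
        have hkey : (crk M A W + 1) + crk M A (U \ {x}) ≤
            crk M A W + crk M A (insert x (U \ {x})) :=
          le_trans (add_le_add hsucc hiu) hsub
        have hkey2 : 1 + crk M A (U \ {x}) ≤ crk M A (insert x (U \ {x})) := by
          rw [add_assoc] at hkey
          exact (WithTop.add_le_add_iff_left (crk_ne_top A W)).mp hkey
        have hρ1 : (1 : ℕ∞) ≤ (ρ : ℕ∞) := by exact_mod_cast hρ
        calc U.encard ≤ (insert x (U \ {x})).encard := encard_le_encard hUx
          _ ≤ (U \ {x}).encard + 1 := encard_insert_le _ _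
          _ ≤ (ρ : ℕ∞) * crk M A (U \ {x}) + 1 := add_le_add_left (hWP _ hU0W) 1
          _ ≤ (ρ : ℕ∞) * crk M A (U \ {x}) + (ρ : ℕ∞) * 1 := by
              rw [mul_one]; exact add_le_add_right hρ1 _
          _ = (ρ : ℕ∞) * (1 + crk M A (U \ {x})) := by ring
          _ ≤ (ρ : ℕ∞) * crk M A (insert x (U \ {x})) := mul_le_mul_right hkey2 _
          _ ≤ (ρ : ℕ∞) * crk M A U :=
              mul_le_mul_right (rkP_mono (insert_subset hxU diff_subset)) _
      · refine hWP U ?_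
        intro y hy
        rcases hU hy with h | h
        · exact absurd (h ▸ hy) hxU
        · exact h
  -- tight sets and their union T
  set Tight : Set (Set α) := {U | U ⊆ W ∧ U.encard = (ρ : ℕ∞) * crk M A U} with hTight
  have pairT : ∀ U1 ∈ Tight, ∀ U2 ∈ Tight, U1 ∪ U2 ∈ Tight := by
    rintro U1 ⟨h1W, h1⟩ U2 ⟨h2W, h2⟩
    have hUW : U1 ∪ U2 ⊆ W := union_subset h1W h2W
    have ha : (U1 ∪ U2).encard ≤ (ρ : ℕ∞) * crk M A (U1 ∪ U2) := hWP _ hUW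
    have ha' : (U1 ∩ U2).encard ≤ (ρ : ℕ∞) * crk M A (U1 ∩ U2) :=
      hWP _ (inter_subset_left.trans h1W)
    have hsub : (ρ : ℕ∞) * crk M A (U1 ∪ U2) + (ρ : ℕ∞) * crk M A (U1 ∩ U2) ≤
        (U1 ∪ U2).encard + (U1 ∩ U2).encard := by
      rw [encard_union_add_encard_inter, h1, h2, ← mul_add, ← mul_add]
      exact mul_le_mul_right (crk_submod M A U1 U2) _
    refine ⟨hUW, le_antisymm ha ?_⟩
    have h5 : (ρ : ℕ∞) * crk M A (U1 ∪ U2) + (ρ : ℕ∞) * crk M A (U1 ∩ U2) ≤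
        (U1 ∪ U2).encard + (ρ : ℕ∞) * crk M A (U1 ∩ U2) :=
      hsub.trans (add_le_add_right ha' _)
    exact cancel_add_right (rho_mul_ne_top ρ (crk_ne_top A _)) h5
  have hTightfin : Tight.Finite := hWfin.finite_subsets.subset fun U hU => hU.1
  have hTin : ⋃₀ Tight ∈ Tight := by
    refine Set.Finite.induction_on_subset (motive := fun (s : Set (Set α)) _ => ⋃₀ s ∈ Tight) _ hTightfin ?_ ?_
    · show ⋃₀ (∅ : Set (Set α)) ∈ Tight
      rw [sUnion_empty]
      exact ⟨empty_subset _, by simp [crk, rkP_empty]⟩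
    · intro a s haTight _ _ ih
      show ⋃₀ (insert a s) ∈ Tight
      rw [sUnion_insert]
      exact pairT a haTight _ ih
  set T : Set α := ⋃₀ Tight with hT
  have hTW : T ⊆ W := sUnion_subset fun U hU => hU.1
  -- every x in V' \ W lies in the "closure" of T
  have hxT : ∀ x ∈ V' \ W, crk M A (insert x T) = crk M A T := by
    rintro x ⟨hxV', hxW⟩
    have hnP := hmaxW x hxV' hxW
    push_neg at hnP
    obtain ⟨U, hU, hUgt⟩ := hnP
    have hxU : x ∈ U := by
      by_contra hxU
      refine absurd (hWP U ?_) (not_le.mpr hUgt)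
      intro y hy
      rcases hU hy with h | h
      · exact absurd (h ▸ hy) hxU
      · exact h
    have hU0W : U \ {x} ⊆ W := by
      intro y hy
      rcases hU hy.1 with h | h
      · exact absurd h hy.2
      · exact h
    have hxU0 : x ∉ U \ {x} := fun h => h.2 rfl
    have hUeq : insert x (U \ {x}) = U := by
      rw [insert_diff_singleton, insert_eq_of_mem hxU]
    have hc1 : (ρ : ℕ∞) * crk M A U ≤ (U \ {x}).encard := by
      have h1 : (ρ : ℕ∞) * crk M A U < (U \ {x}).encard + 1 := by
        rwa [← encard_insert_of_notMem hxU0, hUeq]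
      exact Order.le_of_lt_add_one h1
    have hc2 : (U \ {x}).encard ≤ (ρ : ℕ∞) * crk M A (U \ {x}) := hWP _ hU0W
    have hc3 : (ρ : ℕ∞) * crk M A (U \ {x}) ≤ (ρ : ℕ∞) * crk M A U :=
      mul_le_mul_right (rkP_mono diff_subset) _
    have hU0tight : U \ {x} ∈ Tight := ⟨hU0W, le_antisymm hc2 (hc3.trans hc1)⟩
    have hcU : crk M A U = crk M A (U \ {x}) :=
      le_antisymm (cancel_mul_left hρ (crk_ne_top A _) (hc1.trans hc2))
        (rkP_mono diff_subset)
    have hU0T : U \ {x} ⊆ T := subset_sUnion_of_mem hU0tight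
    have hsub := crk_submod M A T (insert x (U \ {x}))
    have hidu : T ∪ insert x (U \ {x}) = insert x T := by
      rw [union_insert, union_eq_self_of_subset_right hU0T]
    rw [hidu] at hsub
    have h5 : crk M A (insert x (U \ {x})) = crk M A (U \ {x}) := by
      rw [hUeq, hcU]
    rw [h5] at hsub
    have h6 : crk M A (U \ {x}) ≤ crk M A (T ∩ insert x (U \ {x})) :=
      rkP_mono (subset_inter hU0T (subset_insert _ _))
    have h7 : crk M A (insert x T) + crk M A (U \ {x}) ≤
        crk M A T + crk M A (U \ {x}) :=
      (add_le_add_right h6 _).trans hsub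
    exact le_antisymm (cancel_add_right (crk_ne_top A _) h7) (rkP_mono (subset_insert _ _))
  have hclo : crk M A (T ∪ (V' \ W)) = crk M A T :=
    crk_union_eq_of_forall (hV'fin.diff : (V' \ W).Finite) hxT
  have hZV' : T ∪ (V' \ W) ⊆ V' := union_subset (hTW.trans hWV') diff_subset
  have hVZ : V' \ (T ∪ (V' \ W)) = W \ T := by
    ext y
    simp only [mem_diff, mem_union, not_or, not_and, not_not]
    constructor
    · rintro ⟨hyV, hyT, hyW⟩
      exact ⟨hyW hyV, hyT⟩
    · rintro ⟨hyW, hyT⟩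
      exact ⟨hWV' hyW, hyT, fun _ => hyW⟩
  have hstarZ := hstar _ hZV'
  rw [hVZ, hclo] at hstarZ
  have hWcount : (ρ : ℕ∞) * crk M A V' ≤ W.encard := by
    calc (ρ : ℕ∞) * crk M A V' ≤ (W \ T).encard + (ρ : ℕ∞) * crk M A T := hstarZ
      _ = (W \ T).encard + T.encard := by rw [← hTin.2]
      _ = W.encard := encard_diff_add_encard_of_subset hTW
  have hfinal : W.encard = (ρ : ℕ∞) * crk M A W :=
    le_antisymm (hWP W Subset.rfl) (by rw [hrkW]; exact hWcount)
  have hcrkW0 : crk M A W ≠ 0 := by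
    rw [hrkW]
    intro h0
    rw [h0] at hone
    exact absurd hone (by simp)
  refine ⟨W, hWV', ⟨?_, ?_⟩, ?_⟩
  · exact densP_eq_of_encard_eq hfinal hcrkW0 (crk_ne_top A W)
  · intro U hUW
    exact densP_le_of_encard_le (hWP U hUW) (crk_ne_top A U)
  · rw [← crk_diff]
    exact hrkW


end Paper
end

section
/- Let M be a matroid, V' ⊆ V, and let B ⊆ V' be a subset attaining the maximum density ρ* = max_{U ⊆ V'} ρ_M(U) < +∞. Then for any proper subset A ⊊ B, the density of B \ A in the contracted matroid M/A satisfies ρ_{M/A}(B \ A) ≥ ρ*. -/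
open Set ENNReal

namespace Paper

/-- The rank of a set with respect to a matroid equals the cardinality of any `Basis'`. -/
lemma rkP_eq_of_basis' {M : Matroid α} {I X : Set α} (hI : M.IsBasis' I X) :
    rkP M.Indep X = I.encard := by
  refine le_antisymm (iSup₂_le fun J hJ => ?_)
    (le_iSup₂_of_le I ⟨hI.indep, hI.subset⟩ le_rfl)
  obtain ⟨J', hJ', hJJ'⟩ := hJ.1.subset_isBasis'_of_subset hJ.2
  exact (Set.encard_le_encard hJJ').trans_eq
    ((Matroid.isBase_restrict_iff'.2 hJ').encard_eq_encard_of_isBase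
      (Matroid.isBase_restrict_iff'.2 hI))

lemma toENNReal_ne_top_of_ne_top {x : ℕ∞} (h : x ≠ ⊤) : (x : ℝ≥0∞) ≠ ⊤ := by
  rw [← ENat.toENNReal_top]
  exact fun he => h (by exact_mod_cast he)

lemma rkP_le_encard (Indep : Set α → Prop) (X : Set α) : rkP Indep X ≤ X.encard :=
  iSup₂_le fun _ hJ => Set.encard_le_encard hJ.2

/-- If `B ⊆ V'` attains the (finite) maximum density `ρ*` among
subsets of `V'`, then for any proper subset `A ⊊ B` the density of `B \ A` in
`M/A` is at least `ρ*`. -/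
theorem stmt5 {α : Type*} (M : Matroid α) [M.Finite] (V' B : Set α)
    (hV' : V' ⊆ M.E) (ρstar : ℝ≥0∞)
    (hub : ∀ U ⊆ V', dens M U ≤ ρstar) (hBV : B ⊆ V') (hBd : dens M B = ρstar)
    (hfin : ρstar ≠ ⊤) (A : Set α) (hA : A ⊂ B) :
    ρstar ≤ densP (CIndep M A) (B \ A) := by
  have hBE : B ⊆ M.E := hBV.trans hV'
  have hBfin : B.Finite := M.ground_finite.subset hBE
  have hBAne : (B \ A).Nonempty := Set.diff_nonempty.2 hA.not_subset
  have hBne : B.Nonempty := hBAne.mono diff_subset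
  -- encard facts
  have hBtop : B.encard ≠ ⊤ := hBfin.encard_lt_top.ne
  have hAtop : A.encard ≠ ⊤ := (hBfin.subset hA.subset).encard_lt_top.ne
  have hBAtop : (B \ A).encard ≠ ⊤ := (hBfin.subset diff_subset).encard_lt_top.ne
  have hBA0 : (B \ A).encard ≠ 0 := by
    simpa [Set.encard_eq_zero] using hBAne.ne_empty
  -- ranks
  set rA : ℕ∞ := rkP M.Indep A with hrA
  set rB : ℕ∞ := rkP M.Indep B with hrB
  set c : ℕ∞ := rkP (CIndep M A) (B \ A) with hc
  have hrAtop : rA ≠ ⊤ := fun h => hAtop (top_le_iff.1 (h ▸ rkP_le_encard M.Indep A))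
  have hrBtop : rB ≠ ⊤ := fun h => hBtop (top_le_iff.1 (h ▸ rkP_le_encard M.Indep B))
  have hrB0 : rB ≠ 0 := by
    intro h0
    apply hfin
    rw [← hBd]
    unfold dens densP
    rw [← hrB, h0, ENat.toENNReal_zero, ENNReal.div_zero (by
      have : B.encard ≠ 0 := by simpa [Set.encard_eq_zero] using hBne.ne_empty
      exact_mod_cast this)]
  -- key rank inequality : c + rA ≤ rB
  have hkey : c + rA ≤ rB := by
    obtain ⟨IA, hIA⟩ := M.exists_isBasis' A
    have hIAcard : rA = IA.encard := rkP_eq_of_basis' hIA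
    have hcle : c ≤ rB - rA := by
      refine iSup₂_le fun S hS => ?_
      obtain ⟨⟨hSE, B₀, hB₀, hInd⟩, hSBA⟩ := hS
      have hdisj : Disjoint S B₀ := by
        refine Set.disjoint_left.2 fun x hxS hxB => (hSE hxS).2 (hB₀.subset hxB)
      have hsubB : S ∪ B₀ ⊆ B :=
        Set.union_subset (hSBA.trans diff_subset) (hB₀.subset.trans hA.subset)
      have hle : (S ∪ B₀).encard ≤ rB :=
        le_iSup₂_of_le (S ∪ B₀) ⟨hInd, hsubB⟩ le_rfl
      rw [Set.encard_union_eq hdisj] at hle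
      have hB₀card : B₀.encard = rA := (rkP_eq_of_basis' hB₀).symm
      rw [hB₀card] at hle
      exact (ENat.addLECancellable_of_ne_top hrAtop).le_tsub_of_add_le_right hle
    calc c + rA ≤ (rB - rA) + rA := add_le_add hcle le_rfl
      _ = rB := tsub_add_cancel_of_le (by
          refine iSup₂_le fun J hJ => le_iSup₂_of_le J ⟨hJ.1, hJ.2.trans hA.subset⟩ le_rfl)
  -- move to ℝ≥0∞
  have hkey' : (c : ℝ≥0∞) + (rA : ℝ≥0∞) ≤ (rB : ℝ≥0∞) := by
    rw [← ENat.toENNReal_add]; exact ENat.toENNReal_le.2 hkey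
  have hrB0' : (rB : ℝ≥0∞) ≠ 0 := by exact_mod_cast hrB0
  have hrBtop' : (rB : ℝ≥0∞) ≠ ⊤ := toENNReal_ne_top_of_ne_top hrBtop
  have hrAtop' : (rA : ℝ≥0∞) ≠ ⊤ := toENNReal_ne_top_of_ne_top hrAtop
  -- |B| = ρ* * rB
  have hBcard : (B.encard : ℝ≥0∞) = ρstar * (rB : ℝ≥0∞) := by
    rw [← hBd]
    unfold dens densP
    rw [← hrB, ENNReal.div_mul_cancel hrB0' hrBtop']
  -- |A| ≤ ρ* * rA
  have hAcard : (A.encard : ℝ≥0∞) ≤ ρstar * (rA : ℝ≥0∞) := by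
    have := hub A ((hA.subset).trans hBV)
    unfold dens densP at this
    rw [← hrA] at this
    exact (ENNReal.div_le_iff_le_mul (Or.inr hfin) (Or.inl hrAtop')).1 this
  -- |B \ A| + |A| = |B|
  have hsplit : ((B \ A).encard : ℝ≥0∞) + (A.encard : ℝ≥0∞) = (B.encard : ℝ≥0∞) := by
    rw [← ENat.toENNReal_add, Set.encard_diff_add_encard_of_subset hA.subset]
  -- ρ* * c ≤ |B \ A|
  have hmul : ρstar * (c : ℝ≥0∞) ≤ ((B \ A).encard : ℝ≥0∞) := by
    have h1 : ρstar * (c : ℝ≥0∞) + (A.encard : ℝ≥0∞)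
        ≤ ((B \ A).encard : ℝ≥0∞) + (A.encard : ℝ≥0∞) := by
      calc ρstar * (c : ℝ≥0∞) + (A.encard : ℝ≥0∞)
          ≤ ρstar * (c : ℝ≥0∞) + ρstar * (rA : ℝ≥0∞) := add_le_add_right hAcard _
        _ = ρstar * ((c : ℝ≥0∞) + (rA : ℝ≥0∞)) := (mul_add _ _ _).symm
        _ ≤ ρstar * (rB : ℝ≥0∞) := mul_le_mul_right hkey' _
        _ = (B.encard : ℝ≥0∞) := hBcard.symm
        _ = ((B \ A).encard : ℝ≥0∞) + (A.encard : ℝ≥0∞) := hsplit.symm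
    exact (ENNReal.add_le_add_iff_right (toENNReal_ne_top_of_ne_top hAtop)).1 h1
  -- conclude
  unfold densP
  rw [← hc]
  exact (ENNReal.le_div_iff_mul_le (Or.inr (by exact_mod_cast hBA0))
    (Or.inr (toENNReal_ne_top_of_ne_top hBAtop))).2 hmul

end Paper
end

section
/- Let M = (V, I) be a matroid and ρ a positive integer. Define I_ρ = {S ⊆ V : S can be partitioned into ρ sets each independent in M}. Then (V, I_ρ) is a matroid (the ρ-fold union of M), and its rank is at most ρ times the rank of M. -/
open Set ENNReal

namespace Paper

lemma encard_biUnion_le' {α ι : Type*} (s : Finset ι) (B : ι → Set α) :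
    (⋃ i ∈ s, B i).encard ≤ ∑ i ∈ s, (B i).encard := by
  classical
  induction s using Finset.induction with
  | empty => simp
  | insert _ _ h ih =>
    rw [Finset.set_biUnion_insert, Finset.sum_insert h]
    exact le_trans (encard_union_le _ _) (add_le_add_right ih _)

lemma unionIndep_iff_witness {α : Type*} (M : Matroid α) (ρ : ℕ) (S : Set α) :
    UnionIndep M ρ S ↔ ∃ I : Set (Fin ρ × α),
      (Matroid.sum' fun _ : Fin ρ => M).Indep I ∧ InjOn Prod.snd I ∧ Prod.snd '' I = S := by
  constructor
  · rintro ⟨B, hB, hdisj, rfl⟩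
    refine ⟨{p | p.2 ∈ B p.1}, ?_, ?_, ?_⟩
    · rw [Matroid.sum'_indep_iff]
      intro i
      exact hB i
    · rintro ⟨i, x⟩ hp ⟨j, y⟩ hq (h : x = y)
      subst h
      by_contra hne
      have hij : i ≠ j := by simpa using hne
      exact absurd ((hdisj hij).le_bot ⟨hp, hq⟩) (by simp)
    · ext x; simp [Prod.exists]
  · rintro ⟨I, hI, hinj, rfl⟩
    rw [Matroid.sum'_indep_iff] at hI
    refine ⟨fun i => Prod.mk i ⁻¹' I, hI, ?_, ?_⟩
    · intro i j hij
      rw [Function.onFun, Set.disjoint_left]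
      intro x hxi hxj
      exact hij (congrArg Prod.fst (hinj hxi hxj rfl))
    · ext x
      simp [mem_iUnion, Prod.exists, eq_comm]

lemma union_subset_ground {α : Type*} {M : Matroid α} {ρ : ℕ} {S : Set α} (hS : UnionIndep M ρ S) :
    S ⊆ M.E := by
  obtain ⟨B, hB, -, rfl⟩ := hS
  exact iUnion_subset fun i => (hB i).subset_ground

lemma union_aug {α : Type*} (M : Matroid α) [M.Finite] (ρ : ℕ) {S T : Set α}
    (hS : UnionIndep M ρ S) (hT : UnionIndep M ρ T) (hlt : S.ncard < T.ncard) :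
    ∃ e ∈ T, e ∉ S ∧ UnionIndep M ρ (insert e S) := by
  classical
  have hSfin := M.ground_finite.subset (union_subset_ground hS)
  have hTfin := M.ground_finite.subset (union_subset_ground hT)
  obtain ⟨Jw, hJw, hJinj, hJim⟩ := (unionIndep_iff_witness M ρ T).1 hT
  have hJwfin : Jw.Finite := Finite.of_finite_image (hJim ▸ hTfin) hJinj
  by_contra hcon
  push_neg at hcon
  set N := Matroid.sum' fun _ : Fin ρ => M with hN
  have key : ∀ n : ℕ, ∃ I, (N.Indep I ∧ InjOn Prod.snd I ∧ Prod.snd '' I = S) ∧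
      n ≤ (I ∩ Jw).ncard := by
    intro n
    induction n with
    | zero =>
      obtain ⟨Iw, h1, h2, h3⟩ := (unionIndep_iff_witness M ρ S).1 hS
      exact ⟨Iw, ⟨h1, h2, h3⟩, Nat.zero_le _⟩
    | succ n ih =>
      obtain ⟨I, ⟨hIind, hIinj, hIim⟩, hn⟩ := ih
      have hIfin : I.Finite := Finite.of_finite_image (hIim ▸ hSfin) hIinj
      have hcard : I.encard < Jw.encard := by
        rw [← hIfin.cast_ncard_eq, ← hJwfin.cast_ncard_eq, Nat.cast_lt]
        calc I.ncard = S.ncard := by rw [← hIim, ncard_image_of_injOn hIinj]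
          _ < T.ncard := hlt
          _ = Jw.ncard := by rw [← hJim, ncard_image_of_injOn hJinj]
      obtain ⟨x, hxJI, hxind⟩ := hIind.augment hJw hcard
      obtain ⟨hxJ, hxI⟩ := hxJI
      have haT : x.2 ∈ T := hJim ▸ ⟨x, hxJ, rfl⟩
      by_cases haS : x.2 ∈ S
      · -- exchange step
        have hximg : x.2 ∈ Prod.snd '' I := hIim.symm ▸ haS
        obtain ⟨y, hyI, hy2⟩ := hximg
        have hyx : y ≠ x := fun h => hxI (h ▸ hyI)
        have hyJ : y ∉ Jw := fun hyJw => hyx (hJinj hyJw hxJ hy2)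
        refine ⟨insert x (I \ {y}), ⟨?_, ?_, ?_⟩, ?_⟩
        · exact hxind.subset (insert_subset_insert diff_subset)
        · rw [injOn_insert (fun h => hxI h.1)]
          refine ⟨hIinj.mono diff_subset, ?_⟩
          rintro ⟨z, hz, hz2⟩
          exact hz.2 (hIinj hz.1 hyI (hz2.trans hy2.symm))
        · rw [image_insert_eq]
          have himd : Prod.snd '' (I \ {y}) = S \ {x.2} := by
            apply Subset.antisymm
            · rintro _ ⟨z, hz, rfl⟩
              refine ⟨hIim ▸ ⟨z, hz.1, rfl⟩, fun h => hz.2 ?_⟩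
              simp only [mem_singleton_iff] at h
              exact hIinj hz.1 hyI (h.trans hy2.symm)
            · rintro s ⟨hsS, hs⟩
              simp only [mem_singleton_iff] at hs
              obtain ⟨z, hz, rfl⟩ : s ∈ Prod.snd '' I := hIim.symm ▸ hsS
              refine ⟨z, ⟨hz, fun h => hs ?_⟩, rfl⟩
              simp only [mem_singleton_iff] at h
              rw [h, hy2]
          rw [himd, insert_diff_singleton, insert_eq_self.2 haS]
        · have hint : insert x (I \ {y}) ∩ Jw = insert x (I ∩ Jw) := by
            rw [insert_inter_of_mem hxJ]
            congr 1
            ext z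
            simp only [mem_inter_iff, mem_diff, mem_singleton_iff]
            constructor
            · rintro ⟨⟨h1, -⟩, h2⟩; exact ⟨h1, h2⟩
            · rintro ⟨h1, h2⟩; exact ⟨⟨h1, fun h => hyJ (h ▸ h2)⟩, h2⟩
          rw [hint, ncard_insert_of_notMem (fun h => hxI h.1)
            (hIfin.subset inter_subset_left)]
          exact Nat.succ_le_succ hn
      · exact absurd ((unionIndep_iff_witness M ρ _).2 ⟨insert x I, hxind,
          by rw [injOn_insert hxI]; exact ⟨hIinj, by rw [hIim]; exact haS⟩,
          by rw [image_insert_eq, hIim]⟩) (hcon x.2 haT haS)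
  obtain ⟨I, -, hn⟩ := key (Jw.ncard + 1)
  have hle : (I ∩ Jw).ncard ≤ Jw.ncard := ncard_le_ncard inter_subset_right hJwfin
  omega

/-- The `ρ`-fold union of a matroid `M` is a matroid on the same
ground set whose independent sets are exactly the sets partitionable into `ρ`
`M`-independent sets, and its rank is at most `ρ` times the rank of `M`. -/
theorem stmt10 {α : Type*} (M : Matroid α) [M.Finite] (ρ : ℕ) (hρ : 0 < ρ) :
    ∃ Mρ : Matroid α, Mρ.E = M.E ∧ (∀ S, Mρ.Indep S ↔ UnionIndep M ρ S) ∧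
      rk Mρ Mρ.E ≤ (ρ : ℕ∞) * rk M M.E := by
  classical
  have hE : M.E.Finite := M.ground_finite
  have hempty : UnionIndep M ρ ∅ :=
    ⟨fun _ => ∅, fun _ => M.empty_indep, by simp [Pairwise, Function.onFun], by simp⟩
  have hsubset : ∀ ⦃I J : Set α⦄, UnionIndep M ρ J → I ⊆ J → UnionIndep M ρ I := by
    rintro I J ⟨B, hB, hdisj, rfl⟩ hIJ
    refine ⟨fun i => B i ∩ I, fun i => (hB i).subset inter_subset_left,
      fun i j hij => ((hdisj hij).mono inter_subset_left inter_subset_left), ?_⟩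
    rw [← iUnion_inter]
    exact (inter_eq_right.2 hIJ).symm
  set Mρ : Matroid α := (IndepMatroid.ofFinite hE (UnionIndep M ρ) hempty hsubset
    (fun I J hI hJ h => union_aug M ρ hI hJ h)
    (fun I hI => union_subset_ground hI)).matroid with hMρ
  have hind : ∀ S, Mρ.Indep S ↔ UnionIndep M ρ S := by
    intro S
    rw [hMρ, IndepMatroid.matroid_indep_iff, IndepMatroid.ofFinite_indep]
  refine ⟨Mρ, rfl, hind, ?_⟩
  have hrk : ∀ I : Set α, M.Indep I → I.encard ≤ rk M M.E := by
    intro I h1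
    exact le_iSup₂ (f := fun I (_ : I ∈ {I | M.Indep I ∧ I ⊆ M.E}) => I.encard) I
      ⟨h1, h1.subset_ground⟩
  refine iSup₂_le ?_
  rintro I ⟨hI, -⟩
  obtain ⟨B, hB, -, rfl⟩ := (hind I).1 hI
  calc (⋃ i, B i).encard = (⋃ i ∈ Finset.univ, B i).encard := by simp
    _ ≤ ∑ i ∈ Finset.univ, (B i).encard := encard_biUnion_le' _ _
    _ ≤ ∑ _i ∈ (Finset.univ : Finset (Fin ρ)), rk M M.E :=
        Finset.sum_le_sum fun i _ => hrk _ (hB i)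
    _ = (ρ : ℕ∞) * rk M M.E := by
        rw [Finset.sum_const, nsmul_eq_mul]
        simp

end Paper
end

section
/- Let M be a matroid and V' a ρ-DBS. Then V' has exactly ρ · rank_M(V') elements, and any partition of V' into ρ independent sets consists of sets each of size exactly rank_M(V'), each of which spans V' in M. -/
open Set ENNReal

namespace Paper

private lemma encard_iUnion_fin' {α : Type*} : ∀ {n : ℕ} (B : Fin n → Set α),
    Pairwise (Function.onFun Disjoint B) → (⋃ i, B i).encard = ∑ i, (B i).encard := by
  intro n
  induction n with
  | zero => intro B _; simp
  | succ n ih =>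
    intro B hB
    have hU : (⋃ i, B i) = B 0 ∪ ⋃ i : Fin n, B i.succ := by
      ext x
      simp only [Set.mem_iUnion, Set.mem_union]
      constructor
      · rintro ⟨i, hi⟩
        rcases Fin.eq_zero_or_eq_succ i with h | ⟨j, rfl⟩
        · exact Or.inl (h ▸ hi)
        · exact Or.inr ⟨j, hi⟩
      · rintro (h | ⟨j, hj⟩)
        exacts [⟨0, h⟩, ⟨j.succ, hj⟩]
    rw [hU, Set.encard_union_eq, ih _ (fun i j hij => hB ((Fin.succ_injective n).ne hij)),
      Fin.sum_univ_succ]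
    exact Set.disjoint_iUnion_right.2 fun i => hB (Fin.succ_ne_zero i).symm


/-- A `ρ`-DBS `V'` has exactly `ρ · rank_M(V')` elements, and in
any partition of `V'` into `ρ` independent sets each part has exactly
`rank_M(V')` elements and spans `V'`. -/
theorem stmt12 {α : Type*} (M : Matroid α) [M.Finite] (ρ : ℕ) (hρ : 0 < ρ)
    (V' : Set α) (hV' : IsDBS M ρ V') :
    V'.encard = (ρ : ℕ∞) * rk M V' ∧
    ∀ B : Fin ρ → Set α, (∀ i, M.Indep (B i)) →
      Pairwise (Function.onFun Disjoint B) → V' = ⋃ i, B i →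
      ∀ i, (B i).encard = rk M V' ∧ V' ⊆ M.closure (B i) := by
  obtain ⟨hVE, hd, hUb⟩ := hV'
  have hVfin : V'.Finite := M.set_finite V' hVE
  have hrk_le : rk M V' ≤ V'.encard := by
    apply iSup₂_le
    intro I hI
    exact Set.encard_mono hI.2
  have hrk_ne_top : rk M V' ≠ ⊤ := (hrk_le.trans_lt hVfin.encard_lt_top).ne
  have hVne : V'.Nonempty := by
    by_contra h
    rw [Set.not_nonempty_iff_eq_empty] at h
    subst h
    rw [densP, Set.encard_empty] at hd
    simp only [ENat.toENNReal_zero, ENNReal.zero_div] at hd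
    exact hρ.ne' (by exact_mod_cast hd.symm)
  have hrk_ne0 : rk M V' ≠ 0 := by
    intro h
    rw [densP] at hd
    rw [show rkP M.Indep V' = rk M V' from rfl, h] at hd
    rw [ENat.toENNReal_zero, ENNReal.div_zero] at hd
    · exact (ENNReal.natCast_ne_top ρ) hd.symm
    · rw [ne_eq, ← ENat.toENNReal_zero, ENat.toENNReal_inj]
      exact hVne.encard_pos.ne'
  have hr0 : (rk M V' : ℝ≥0∞) ≠ 0 := by
    rw [ne_eq, ← ENat.toENNReal_zero, ENat.toENNReal_inj]
    exact hrk_ne0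
  have hrt : (rk M V' : ℝ≥0∞) ≠ ⊤ := by
    simp only [ne_eq, ← ENat.toENNReal_top, ENat.toENNReal_inj]
    exact hrk_ne_top
  have hd' : (V'.encard : ℝ≥0∞) / (rk M V' : ℝ≥0∞) = ρ := hd
  have h1 : (rk M V' : ℝ≥0∞) * ρ = (V'.encard : ℝ≥0∞) :=
    (ENNReal.eq_div_iff hr0 hrt).mp hd'.symm
  have hcard : V'.encard = (ρ : ℕ∞) * rk M V' := by
    have h2 : ((V'.encard : ℕ∞) : ℝ≥0∞) = (((ρ : ℕ∞) * rk M V' : ℕ∞) : ℝ≥0∞) := by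
      push_cast
      rw [← h1]; ring
    exact_mod_cast h2
  refine ⟨hcard, ?_⟩
  intro B hBi hdisj hVeq i
  have hBsub : ∀ j, B j ⊆ V' := fun j => hVeq ▸ Set.subset_iUnion B j
  have hBle : ∀ j, (B j).encard ≤ rk M V' := fun j =>
    le_iSup₂ (f := fun I (_ : I ∈ {I | M.Indep I ∧ I ⊆ V'}) => I.encard) (B j) ⟨hBi j, hBsub j⟩
  have hsum : ∑ j, (B j).encard = V'.encard := by
    rw [hVeq, encard_iUnion_fin' _ hdisj]
  -- lift to ℕ
  set r : ℕ := (rk M V').toNat with hrdef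
  have hr : (r : ℕ∞) = rk M V' := ENat.coe_toNat hrk_ne_top
  have hBfin : ∀ j, (B j).Finite := fun j => hVfin.subset (hBsub j)
  have hBenc : ∀ j, (B j).encard = ((B j).ncard : ℕ∞) := fun j => ((hBfin j).cast_ncard_eq).symm
  have hsumN : ∑ j, (B j).ncard = ρ * r := by
    have : ((∑ j, (B j).ncard : ℕ) : ℕ∞) = ((ρ * r : ℕ) : ℕ∞) := by
      push_cast
      rw [← (funext hBenc : (fun j => (B j).encard) = _)] at *
      calc (∑ j, (B j).encard) = V'.encard := hsum
        _ = (ρ : ℕ∞) * rk M V' := hcard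
        _ = (ρ : ℕ∞) * (r : ℕ∞) := by rw [hr]
    exact_mod_cast this
  have hleN : ∀ j, (B j).ncard ≤ r := by
    intro j
    have := hBle j
    rw [hBenc j, ← hr] at this
    exact_mod_cast this
  have heach : ∀ j, (B j).ncard = r := by
    by_contra h
    push_neg at h
    obtain ⟨j, hj⟩ := h
    have hlt : (B j).ncard < r := lt_of_le_of_ne (hleN j) hj
    have : ∑ k, (B k).ncard < ∑ _k : Fin ρ, r :=
      Finset.sum_lt_sum (fun k _ => hleN k) ⟨j, Finset.mem_univ j, hlt⟩
    rw [hsumN, Finset.sum_const, Finset.card_univ, Fintype.card_fin, smul_eq_mul] at this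
    omega
  have hBirk : (B i).encard = rk M V' := by
    rw [hBenc i, heach i, hr]
  refine ⟨hBirk, ?_⟩
  intro x hx
  by_contra hxcl
  have hxE : x ∈ M.E := hVE hx
  have hxBi : x ∉ B i := fun hmem =>
    hxcl (M.subset_closure (B i) (hBi i).subset_ground hmem)
  have hins : M.Indep (insert x (B i)) :=
    (hBi i).insert_indep_iff.mpr (Or.inl ⟨hxE, hxcl⟩)
  have hins_sub : insert x (B i) ⊆ V' := Set.insert_subset hx (hBsub i)
  have hle : (insert x (B i)).encard ≤ rk M V' :=
    le_iSup₂ (f := fun I (_ : I ∈ {I | M.Indep I ∧ I ⊆ V'}) => I.encard) _ ⟨hins, hins_sub⟩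
  rw [Set.encard_insert_of_notMem hxBi, hBirk, ← hr] at hle
  have : (r : ℕ∞) + 1 ≤ (r : ℕ∞) := hle
  have : r + 1 ≤ r := by exact_mod_cast this
  omega


end Paper
end
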